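/- arXiv:2402.12148 — 5 statements merged into one kernel-verified Lean document; each statement's English description precedes it below -/
import Mathlib

section
/- Let k ≥ 1, n ≥ 1 and let A, B be sets of 2-element subsets of {1,…,n}. Let P be an induced path on 4k+3 vertices in G_{k,n}(A,B) whose endpoints are v_0 and v_1, which contains w, and such that the two neighbors of w on P are K^0_{2k}[j] and K^1_{2k}[i] with i ≠ j. Then for every ℓ ∈ {1,…,2k}, the set of vertices of P lying in K^0_ℓ ∪ K^1_ℓ is exactly {K^0_ℓ[i], K^1_ℓ[j]} or exactly {K^0_ℓ[j], K^1_ℓ[i]}. -/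
/-!
The graph `G_{k,n}(A,B)` from the paper "Local certification of forbidden subgraphs".

Vertices: clique vertices `(b, ℓ, i)` where `b : Bool` is the side (false = superscript 0,
true = superscript 1), `ℓ : Fin (2*k)` is the (0-based) level, so `K^b_{ℓ+1}` in the paper's
1-based notation, and `i : Fin n` is the label inside the clique; plus three special vertices
`Sum.inr 0 = v₀`, `Sum.inr 1 = v₁`, `Sum.inr 2 = w`.

A set `A` of 2-element subsets of `{1,…,n}` is encoded as `A : Set (Sym2 (Fin n))` all of whose
members are non-diagonal.
-/

/-- Vertex type of `G_{k,n}(A,B)`. -/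
abbrev GknVert (k n : ℕ) := (Bool × Fin (2 * k) × Fin n) ⊕ Fin 3

/-- The edges of `G_{k,n}(A,B)`, given in one direction; the graph is obtained by
symmetrizing with `SimpleGraph.fromRel`. -/
def gknRel (k n : ℕ) (A B : Set (Sym2 (Fin n))) :
    GknVert k n → GknVert k n → Prop
  | Sum.inl (b, l, i), Sum.inl (b', l', j) =>
      -- edges inside one clique
      (b = b' ∧ l = l' ∧ i ≠ j) ∨
      -- the bipartite graph `G_A` between `K^0_1` and `K^1_1`
      (b = false ∧ b' = true ∧ (l : ℕ) = 0 ∧ (l' : ℕ) = 0 ∧ (i = j ∨ s(i, j) ∉ A)) ∨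
      -- the bipartite graph `G_B` between `K^0_{2k}` and `K^1_{2k}`
      (b = false ∧ b' = true ∧ (l : ℕ) = 2 * k - 1 ∧ (l' : ℕ) = 2 * k - 1 ∧
        (i = j ∨ s(i, j) ∉ B)) ∨
      -- the perfect matchings between `K^0_ℓ` and `K^1_ℓ` for `2 ≤ ℓ ≤ 2k-1` (1-based)
      (b ≠ b' ∧ l = l' ∧ 1 ≤ (l : ℕ) ∧ (l : ℕ) ≤ 2 * k - 2 ∧ i = j) ∨
      -- the antimatchings between consecutive levels (all four pairs of cliques)
      ((l' : ℕ) = (l : ℕ) + 1 ∧ i ≠ j)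
  | Sum.inl (b, l, _), Sum.inr s =>
      -- `v₀` is complete to `K^0_1`, `v₁` is complete to `K^1_1`,
      -- `w` is complete to `K^0_{2k} ∪ K^1_{2k}`
      (s = 0 ∧ b = false ∧ (l : ℕ) = 0) ∨
      (s = 1 ∧ b = true ∧ (l : ℕ) = 0) ∨
      (s = 2 ∧ (l : ℕ) = 2 * k - 1)
  | Sum.inr _, Sum.inl _ => False
  | Sum.inr _, Sum.inr _ => False

/-- The graph `G_{k,n}(A,B)`. -/
def Gkn (k n : ℕ) (A B : Set (Sym2 (Fin n))) : SimpleGraph (GknVert k n) :=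
  SimpleGraph.fromRel (gknRel k n A B)


/-- The vertex set of the clique `K^b_{ℓ+1}` (0-based level `ℓ`). -/
def gknClique (k n : ℕ) (b : Bool) (l : Fin (2 * k)) : Set (GknVert k n) :=
  {v | ∃ i : Fin n, v = Sum.inl (b, l, i)}

private def gknLvl {k n : ℕ} : GknVert k n → ℕ
  | Sum.inl (_, l, _) => l
  | Sum.inr _ => 0

private lemma gknRel_lvl {k n : ℕ} {A B : Set (Sym2 (Fin n))}
    {b b' : Bool} {l l' : Fin (2 * k)} {a a' : Fin n}
    (h : gknRel k n A B (Sum.inl (b, l, a)) (Sum.inl (b', l', a'))) :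
    (l : ℕ) ≤ (l' : ℕ) + 1 ∧ (l' : ℕ) ≤ (l : ℕ) + 1 := by
  simp only [gknRel] at h
  rcases h with ⟨_, h, _⟩ | ⟨_, _, h1, h2, _⟩ | ⟨_, _, h1, h2, _⟩ | ⟨_, h, _⟩ | ⟨h, _⟩ <;>
    first
      | (cases h; omega)
      | omega

private lemma gkn_adj_lvl {k n : ℕ} {A B : Set (Sym2 (Fin n))}
    {b b' : Bool} {l l' : Fin (2 * k)} {a a' : Fin n}
    (h : (Gkn k n A B).Adj (Sum.inl (b, l, a)) (Sum.inl (b', l', a'))) :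
    (l : ℕ) ≤ (l' : ℕ) + 1 ∧ (l' : ℕ) ≤ (l : ℕ) + 1 := by
  rw [Gkn, SimpleGraph.fromRel_adj] at h
  obtain ⟨-, h | h⟩ := h
  · exact gknRel_lvl h
  · obtain ⟨h1, h2⟩ := gknRel_lvl h; exact ⟨h2, h1⟩

private lemma gkn_nonadj_same {k n : ℕ} (hk : 1 ≤ k) {A B : Set (Sym2 (Fin n))}
    {b b' : Bool} {l : Fin (2 * k)} {a a' : Fin n}
    (hne : (Sum.inl (b, l, a) : GknVert k n) ≠ Sum.inl (b', l, a'))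
    (h : ¬ (Gkn k n A B).Adj (Sum.inl (b, l, a)) (Sum.inl (b', l, a'))) :
    b ≠ b' ∧ a ≠ a' := by
  rw [Gkn, SimpleGraph.fromRel_adj] at h
  push_neg at h
  obtain ⟨h1, h2⟩ := h hne
  have hbb : b ≠ b' := by
    rintro rfl
    have haa : a ≠ a' := by rintro rfl; exact hne rfl
    exact h1 (Or.inl ⟨rfl, rfl, haa⟩)
  refine ⟨hbb, ?_⟩
  rintro rfl
  rcases Nat.eq_zero_or_pos (l : ℕ) with hl0 | hlpos
  · cases b <;> cases b'
    · exact hbb rfl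
    · exact h1 (Or.inr (Or.inl ⟨rfl, rfl, hl0, hl0, Or.inl rfl⟩))
    · exact h2 (Or.inr (Or.inl ⟨rfl, rfl, hl0, hl0, Or.inl rfl⟩))
    · exact hbb rfl
  · rcases eq_or_ne (l : ℕ) (2 * k - 1) with hl1 | hl1
    · cases b <;> cases b'
      · exact hbb rfl
      · exact h1 (Or.inr (Or.inr (Or.inl ⟨rfl, rfl, hl1, hl1, Or.inl rfl⟩)))
      · exact h2 (Or.inr (Or.inr (Or.inl ⟨rfl, rfl, hl1, hl1, Or.inl rfl⟩)))
      · exact hbb rfl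
    · have hl2 : (l : ℕ) ≤ 2 * k - 2 := by have := l.isLt; omega
      exact h1 (Or.inr (Or.inr (Or.inr (Or.inl ⟨hbb, rfl, hlpos, hl2, rfl⟩))))

private lemma gkn_nonadj_consec {k n : ℕ} {A B : Set (Sym2 (Fin n))}
    {b b' : Bool} {l l' : Fin (2 * k)} {a a' : Fin n}
    (hl : (l' : ℕ) = (l : ℕ) + 1)
    (h : ¬ (Gkn k n A B).Adj (Sum.inl (b, l, a)) (Sum.inl (b', l', a'))) :
    a = a' := by
  by_contra haa
  apply h
  rw [Gkn, SimpleGraph.fromRel_adj]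
  constructor
  · intro he
    have := congrArg gknLvl he
    simp only [gknLvl] at this
    omega
  · exact Or.inl (by simp only [gknRel]; exact Or.inr (Or.inr (Or.inr (Or.inr ⟨hl, haa⟩))))

set_option maxHeartbeats 1000000

/-- let `P` be an induced path on `4k+3` vertices in `G_{k,n}(A,B)` (given
as a graph embedding `f`), with endpoints `v₀` and `v₁`, containing `w` at an interior
position `t`, whose two neighbours on `P` are `K^0_{2k}[j]` and `K^1_{2k}[i]` with `i ≠ j`.
Then for every level `ℓ`, the vertices of `P` in `K^0_ℓ ∪ K^1_ℓ` are exactly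
`{K^0_ℓ[i], K^1_ℓ[j]}` or exactly `{K^0_ℓ[j], K^1_ℓ[i]}`. -/
theorem gkn_inducedPath_alternation
    (k n : ℕ) (hk : 1 ≤ k) (hn : 1 ≤ n)
    (A B : Set (Sym2 (Fin n)))
    (hA : ∀ e ∈ A, ¬ e.IsDiag) (hB : ∀ e ∈ B, ¬ e.IsDiag)
    (f : SimpleGraph.pathGraph (4 * k + 3) ↪g Gkn k n A B)
    (i j : Fin n) (hij : i ≠ j)
    (hend0 : f ⟨0, by omega⟩ = Sum.inr 0)
    (hend1 : f ⟨4 * k + 2, by omega⟩ = Sum.inr 1)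
    (t : ℕ) (ht0 : 0 < t) (ht1 : t < 4 * k + 2)
    (hw : f ⟨t, by omega⟩ = Sum.inr 2)
    (hnbrs : ({f ⟨t - 1, by omega⟩, f ⟨t + 1, by omega⟩} : Set (GknVert k n)) =
      {Sum.inl (false, ⟨2 * k - 1, by omega⟩, j), Sum.inl (true, ⟨2 * k - 1, by omega⟩, i)}) :
    ∀ l : Fin (2 * k),
      Set.range ⇑f ∩ (gknClique k n false l ∪ gknClique k n true l) =
          {Sum.inl (false, l, i), Sum.inl (true, l, j)} ∨
      Set.range ⇑f ∩ (gknClique k n false l ∪ gknClique k n true l) =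
          {Sum.inl (false, l, j), Sum.inl (true, l, i)} := by
  intro l
  set u0 : GknVert k n := Sum.inl (false, ⟨2 * k - 1, by omega⟩, j) with hu0
  set u1 : GknVert k n := Sum.inl (true, ⟨2 * k - 1, by omega⟩, i) with hu1
  set F : ℕ → GknVert k n := fun m => f ⟨m % (4 * k + 3), Nat.mod_lt _ (by omega)⟩ with hFdef
  have hF : ∀ (m : ℕ) (hm : m < 4 * k + 3), F m = f ⟨m, hm⟩ := by
    intro m hm
    simp only [hFdef]
    congr 1
    exact Fin.ext (Nat.mod_eq_of_lt hm)
  have hFinj : ∀ m m', m < 4 * k + 3 → m' < 4 * k + 3 → F m = F m' → m = m' := by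
    intro m m' hm hm' h
    rw [hF m hm, hF m' hm'] at h
    simpa using congrArg Fin.val (f.injective h)
  have hadj : ∀ m, m + 1 < 4 * k + 3 → (Gkn k n A B).Adj (F m) (F (m + 1)) := by
    intro m hm
    rw [hF m (by omega), hF (m + 1) hm, f.map_adj_iff, SimpleGraph.pathGraph_adj]
    left; rfl
  have hnadj : ∀ m m', m' < 4 * k + 3 → m + 2 ≤ m' → ¬ (Gkn k n A B).Adj (F m) (F m') := by
    intro m m' hm' hmm
    rw [hF m (by omega), hF m' hm', f.map_adj_iff, SimpleGraph.pathGraph_adj]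
    simp only [not_or]
    omega
  have hF0 : F 0 = Sum.inr 0 := by rw [hF 0 (by omega)]; exact hend0
  have hFend : F (4 * k + 2) = Sum.inr 1 := by rw [hF _ (by omega)]; exact hend1
  have hFt : F t = Sum.inr 2 := by rw [hF t (by omega)]; exact hw
  have hu01 : u0 ≠ u1 := by simp [hu0, hu1]
  have hnb : ({F (t - 1), F (t + 1)} : Set (GknVert k n)) = {u0, u1} := by
    rw [hF (t - 1) (by omega), hF (t + 1) (by omega)]
    exact hnbrs
  have hpair : (F (t - 1) = u0 ∧ F (t + 1) = u1) ∨ (F (t - 1) = u1 ∧ F (t + 1) = u0) := by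
    have h1 : F (t - 1) ∈ ({u0, u1} : Set (GknVert k n)) := by
      rw [← hnb]; exact Set.mem_insert _ _
    have h2 : F (t + 1) ∈ ({u0, u1} : Set (GknVert k n)) := by
      rw [← hnb]; exact Set.mem_insert_of_mem _ rfl
    have h3 : u0 ∈ ({F (t - 1), F (t + 1)} : Set (GknVert k n)) := by
      rw [hnb]; exact Set.mem_insert _ _
    have h4 : u1 ∈ ({F (t - 1), F (t + 1)} : Set (GknVert k n)) := by
      rw [hnb]; exact Set.mem_insert_of_mem _ rfl
    simp only [Set.mem_insert_iff, Set.mem_singleton_iff] at h1 h2 h3 h4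
    rcases h1 with h1 | h1 <;> rcases h2 with h2 | h2
    · exfalso
      rcases h4 with h4 | h4
      · exact hu01 (h1.symm.trans h4.symm)
      · exact hu01 (h2.symm.trans h4.symm)
    · exact Or.inl ⟨h1, h2⟩
    · exact Or.inr ⟨h1, h2⟩
    · exfalso
      rcases h3 with h3 | h3
      · exact hu01 (h3.trans h1)
      · exact hu01 (h3.trans h2)
  have ht2 : 2 ≤ t := by
    by_contra h
    have h1 : t - 1 = 0 := by omega
    rw [h1, hF0] at hpair
    rcases hpair with ⟨h2, -⟩ | ⟨h2, -⟩ <;> simp [hu0, hu1] at h2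
  have ht4 : t ≤ 4 * k := by
    by_contra h
    have h1 : t + 1 = 4 * k + 2 := by omega
    rw [h1, hFend] at hpair
    rcases hpair with ⟨-, h2⟩ | ⟨-, h2⟩ <;> simp [hu0, hu1] at h2
  have hclq : ∀ m, 0 < m → m < 4 * k + 2 → m ≠ t →
      ∃ b lv a, F m = Sum.inl (b, lv, a) := by
    intro m h1 h2 h3
    rcases hFm : F m with ⟨b, lv, a⟩ | s
    · exact ⟨b, lv, a, rfl⟩
    · exfalso
      rcases s with ⟨sv, hsv⟩
      interval_cases sv
      · have : m = 0 := hFinj m 0 (by omega) (by omega) (by rw [hFm, hF0]; rfl)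
        omega
      · have : m = 4 * k + 2 := hFinj m (4 * k + 2) (by omega) (by omega) (by rw [hFm, hFend]; rfl)
        omega
      · have : m = t := hFinj m t (by omega) (by omega) (by rw [hFm, hFt]; rfl)
        omega
  have chain : ∀ s p, 1 ≤ p → p + s ≤ 4 * k + 1 → (p + s < t ∨ t < p) →
      gknLvl (F (p + s)) ≤ gknLvl (F p) + s ∧ gknLvl (F p) ≤ gknLvl (F (p + s)) + s := by
    intro s
    induction s with
    | zero => intro p _ _ _; simp
    | succ s ih =>
      intro p hp1 hp2 hp3
      have h1 := ih p (by omega) (by omega) (hp3.imp (fun h => by omega) id)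
      obtain ⟨b1, l1, a1, e1⟩ := hclq (p + s) (by omega) (by omega)
        (by rcases hp3 with h | h <;> omega)
      obtain ⟨b2, l2, a2, e2⟩ := hclq (p + s + 1) (by omega) (by omega)
        (by rcases hp3 with h | h <;> omega)
      have ha := hadj (p + s) (by omega)
      rw [e1, e2] at ha
      have hll := gkn_adj_lvl ha
      rw [show p + (s + 1) = p + s + 1 from rfl, e2]
      rw [e1] at h1
      simp only [gknLvl] at h1 ⊢
      omega
  have hx1 : ∃ a, F 1 = Sum.inl (false, (⟨0, by omega⟩ : Fin (2 * k)), a) := by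
    have ha := hadj 0 (by omega)
    rcases hFm : F 1 with ⟨b, lv, a⟩ | s
    · rw [hF0, hFm, Gkn, SimpleGraph.fromRel_adj] at ha
      obtain ⟨-, h | h⟩ := ha
      · exact absurd h (by simp [gknRel])
      · rcases h with ⟨-, hb, hl⟩ | ⟨h01, -⟩ | ⟨h02, -⟩
        · subst hb
          have hlv : lv = ⟨0, by omega⟩ := Fin.ext hl
          exact ⟨a, by rw [hlv]⟩
        · exact absurd h01 (by decide)
        · exact absurd h02 (by decide)
    · exfalso
      rw [hF0, hFm, Gkn, SimpleGraph.fromRel_adj] at ha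
      obtain ⟨-, h | h⟩ := ha <;> exact h
  have hx2 : ∃ a, F (4 * k + 1) = Sum.inl (true, (⟨0, by omega⟩ : Fin (2 * k)), a) := by
    have ha := hadj (4 * k + 1) (by omega)
    rcases hFm : F (4 * k + 1) with ⟨b, lv, a⟩ | s
    · rw [hFend, hFm, Gkn, SimpleGraph.fromRel_adj] at ha
      obtain ⟨-, h | h⟩ := ha
      · rcases h with ⟨h01, -⟩ | ⟨-, hb, hl⟩ | ⟨h02, -⟩
        · exact absurd h01 (by decide)
        · subst hb
          have hlv : lv = ⟨0, by omega⟩ := Fin.ext hl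
          exact ⟨a, by rw [hlv]⟩
        · exact absurd h02 (by decide)
      · exact absurd h (by simp [gknRel])
    · exfalso
      rw [hFend, hFm, Gkn, SimpleGraph.fromRel_adj] at ha
      obtain ⟨-, h | h⟩ := ha <;> exact h
  obtain ⟨a0, hFone⟩ := hx1
  obtain ⟨a4, hFlast⟩ := hx2
  have hlvl1 : gknLvl (F 1) = 0 := by rw [hFone]; rfl
  have hlvl4 : gknLvl (F (4 * k + 1)) = 0 := by rw [hFlast]; rfl
  have hlvlt1 : gknLvl (F (t - 1)) = 2 * k - 1 := by
    rcases hpair with ⟨h, -⟩ | ⟨h, -⟩ <;> rw [h] <;> rfl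
  have hlvlt2 : gknLvl (F (t + 1)) = 2 * k - 1 := by
    rcases hpair with ⟨-, h⟩ | ⟨-, h⟩ <;> rw [h] <;> rfl
  have htlow := chain (t - 2) 1 le_rfl (by omega) (Or.inl (by omega))
  rw [show 1 + (t - 2) = t - 1 by omega] at htlow
  have hthigh := chain (4 * k - t) (t + 1) (by omega) (by omega) (Or.inr (by omega))
  rw [show t + 1 + (4 * k - t) = 4 * k + 1 by omega] at hthigh
  have ht : t = 2 * k + 1 := by
    rw [hlvlt1, hlvl1] at htlow
    rw [hlvl4, hlvlt2] at hthigh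
    omega
  have hlev1 : ∀ m, 1 ≤ m → m ≤ 2 * k → gknLvl (F m) = m - 1 := by
    intro m h1 h2
    have c1 := chain (m - 1) 1 le_rfl (by omega) (Or.inl (by omega))
    have c2 := chain (2 * k - m) m (by omega) (by omega) (Or.inl (by omega))
    rw [show 1 + (m - 1) = m by omega] at c1
    rw [show m + (2 * k - m) = 2 * k by omega, show 2 * k = t - 1 by omega, hlvlt1] at c2
    rw [hlvl1] at c1
    omega
  have hlev2 : ∀ m, 2 * k + 2 ≤ m → m ≤ 4 * k + 1 → gknLvl (F m) = 4 * k + 1 - m := by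
    intro m h1 h2
    have c1 := chain (m - (2 * k + 2)) (2 * k + 2) (by omega) (by omega) (Or.inr (by omega))
    have c2 := chain (4 * k + 1 - m) m (by omega) (by omega) (Or.inr (by omega))
    rw [show 2 * k + 2 + (m - (2 * k + 2)) = m by omega, show 2 * k + 2 = t + 1 by omega,
      hlvlt2] at c1
    rw [show m + (4 * k + 1 - m) = 4 * k + 1 by omega, hlvl4] at c2
    omega
  -- the key alternation induction, downward from the neighbours of w
  have key : ∀ d, d ≤ 2 * k - 1 →
      ∃ b : Bool,
        (F (2 * k - d) = Sum.inl (b, ⟨2 * k - 1 - d, by omega⟩, i) ∧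
          F (2 * k + 2 + d) = Sum.inl (!b, ⟨2 * k - 1 - d, by omega⟩, j)) ∨
        (F (2 * k - d) = Sum.inl (b, ⟨2 * k - 1 - d, by omega⟩, j) ∧
          F (2 * k + 2 + d) = Sum.inl (!b, ⟨2 * k - 1 - d, by omega⟩, i)) := by
    intro d
    induction d with
    | zero =>
      intro _
      have e1 : 2 * k - 0 = t - 1 := by omega
      have e2 : 2 * k + 2 + 0 = t + 1 := by omega
      rw [e1, e2]
      rcases hpair with ⟨h1, h2⟩ | ⟨h1, h2⟩
      · exact ⟨false, Or.inr ⟨by rw [h1, hu0]; simp, by rw [h2, hu1]; simp⟩⟩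
      · exact ⟨true, Or.inl ⟨by rw [h1, hu1]; simp, by rw [h2, hu0]; simp⟩⟩
    | succ d ih =>
      intro hd
      obtain ⟨b, hcase⟩ := ih (by omega)
      -- new vertices at level 2k-2-d
      obtain ⟨b1, l1, a1, e1⟩ := hclq (2 * k - d - 1) (by omega) (by omega) (by omega)
      obtain ⟨b2, l2, a2, e2⟩ := hclq (2 * k + 3 + d) (by omega) (by omega) (by omega)
      have hl1 : (l1 : ℕ) = 2 * k - 2 - d := by
        have := hlev1 (2 * k - d - 1) (by omega) (by omega)
        rw [e1] at this
        simp only [gknLvl] at this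
        omega
      have hl2 : (l2 : ℕ) = 2 * k - 2 - d := by
        have := hlev2 (2 * k + 3 + d) (by omega) (by omega)
        rw [e2] at this
        simp only [gknLvl] at this
        omega
      -- same level, non-adjacent : opposite sides
      have hl21 : l2 = l1 := Fin.ext (by omega)
      have e2' : F (2 * k + 3 + d) = Sum.inl (b2, l1, a2) := by rw [e2, hl21]
      have hne12 : (Sum.inl (b1, l1, a1) : GknVert k n) ≠ Sum.inl (b2, l1, a2) := by
        rw [← e1, ← e2']
        intro h
        have := hFinj _ _ (by omega) (by omega) h
        omega
      have hnadj12 : ¬ (Gkn k n A B).Adj (Sum.inl (b1, l1, a1)) (Sum.inl (b2, l1, a2)) := by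
        rw [← e1, ← e2']
        exact hnadj _ _ (by omega) (by omega)
      obtain ⟨hbb, -⟩ := gkn_nonadj_same hk hne12 hnadj12
      have hb2 : b2 = !b1 := by revert hbb; cases b1 <;> cases b2 <;> decide
      have hl1' : l1 = ⟨2 * k - 1 - (d + 1), by omega⟩ :=
        Fin.ext (show (l1 : ℕ) = 2 * k - 1 - (d + 1) by omega)
      have hl2' : l2 = ⟨2 * k - 1 - (d + 1), by omega⟩ :=
        Fin.ext (show (l2 : ℕ) = 2 * k - 1 - (d + 1) by omega)
      have hpos1 : 2 * k - (d + 1) = 2 * k - d - 1 := by omega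
      have hpos2 : 2 * k + 2 + (d + 1) = 2 * k + 3 + d := by omega
      rcases hcase with ⟨hx, hy⟩ | ⟨hx, hy⟩
      · -- old: x = (b, i), y = (!b, j);  new labels: a1 = j, a2 = i
        have ha1 : a1 = j := by
          have hna := hnadj (2 * k - d - 1) (2 * k + 2 + d) (by omega) (by omega)
          rw [e1, hy] at hna
          exact gkn_nonadj_consec (show ((⟨2 * k - 1 - d, by omega⟩ : Fin (2 * k)) : ℕ) =
            (l1 : ℕ) + 1 by show 2 * k - 1 - d = (l1 : ℕ) + 1; omega) hna
        have ha2 : a2 = i := by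
          have hna := hnadj (2 * k - d) (2 * k + 3 + d) (by omega) (by omega)
          rw [hx, e2] at hna
          have hna' : ¬ (Gkn k n A B).Adj (Sum.inl (b2, l2, a2))
              (Sum.inl (b, (⟨2 * k - 1 - d, by omega⟩ : Fin (2 * k)), i)) :=
            fun h => hna h.symm
          exact gkn_nonadj_consec (show ((⟨2 * k - 1 - d, by omega⟩ : Fin (2 * k)) : ℕ) =
            (l2 : ℕ) + 1 by show 2 * k - 1 - d = (l2 : ℕ) + 1; omega) hna'
        refine ⟨b1, Or.inr ⟨?_, ?_⟩⟩
        · rw [hpos1, e1, ha1, hl1']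
        · rw [hpos2, e2, ha2, hl2', hb2]
      · -- old: x = (b, j), y = (!b, i);  new labels: a1 = i, a2 = j
        have ha1 : a1 = i := by
          have hna := hnadj (2 * k - d - 1) (2 * k + 2 + d) (by omega) (by omega)
          rw [e1, hy] at hna
          exact gkn_nonadj_consec (show ((⟨2 * k - 1 - d, by omega⟩ : Fin (2 * k)) : ℕ) =
            (l1 : ℕ) + 1 by show 2 * k - 1 - d = (l1 : ℕ) + 1; omega) hna
        have ha2 : a2 = j := by
          have hna := hnadj (2 * k - d) (2 * k + 3 + d) (by omega) (by omega)
          rw [hx, e2] at hna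
          have hna' : ¬ (Gkn k n A B).Adj (Sum.inl (b2, l2, a2))
              (Sum.inl (b, (⟨2 * k - 1 - d, by omega⟩ : Fin (2 * k)), j)) :=
            fun h => hna h.symm
          exact gkn_nonadj_consec (show ((⟨2 * k - 1 - d, by omega⟩ : Fin (2 * k)) : ℕ) =
            (l2 : ℕ) + 1 by show 2 * k - 1 - d = (l2 : ℕ) + 1; omega) hna'
        refine ⟨b1, Or.inl ⟨?_, ?_⟩⟩
        · rw [hpos1, e1, ha1, hl1']
        · rw [hpos2, e2, ha2, hl2', hb2]
  -- use the key induction at level l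
  obtain ⟨b, hcase⟩ := key (2 * k - 1 - (l : ℕ)) (by omega)
  rw [show 2 * k - (2 * k - 1 - (l : ℕ)) = 1 + (l : ℕ) by omega,
    show 2 * k + 2 + (2 * k - 1 - (l : ℕ)) = 4 * k + 1 - (l : ℕ) by omega] at hcase
  have hlval : (l : ℕ) ≤ 2 * k - 1 := by have := l.isLt; omega
  simp only [show 2 * k - 1 - (2 * k - 1 - (l : ℕ)) = (l : ℕ) by omega, Fin.eta] at hcase
  -- membership characterization
  have hmem : ∀ (p : Fin (4 * k + 3)) (bb : Bool) (aa : Fin n), f p = Sum.inl (bb, l, aa) →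
      (p : ℕ) = 1 + (l : ℕ) ∨ (p : ℕ) = 4 * k + 1 - (l : ℕ) := by
    intro p bb aa hvl
    have hvF : F (p : ℕ) = Sum.inl (bb, l, aa) := by
      rw [hF (p : ℕ) p.isLt, ← hvl]
    have hm0 : (p : ℕ) ≠ 0 := by intro h; rw [h, hF0] at hvF; simp at hvF
    have hm1 : (p : ℕ) ≠ 4 * k + 2 := by intro h; rw [h, hFend] at hvF; simp at hvF
    have hmt : (p : ℕ) ≠ t := by intro h; rw [h, hFt] at hvF; simp at hvF
    have hplt : (p : ℕ) < 4 * k + 3 := p.isLt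
    by_cases hc : (p : ℕ) ≤ 2 * k
    · left
      have hlv := hlev1 (p : ℕ) (by omega) hc
      rw [hvF] at hlv
      simp only [gknLvl] at hlv
      omega
    · right
      have hlv := hlev2 (p : ℕ) (by omega) (by omega)
      rw [hvF] at hlv
      simp only [gknLvl] at hlv
      omega
  have hclmem : ∀ (bb : Bool) (c : Fin n),
      (Sum.inl (bb, l, c) : GknVert k n) ∈ gknClique k n false l ∪ gknClique k n true l := by
    intro bb c
    cases bb
    · exact Or.inl ⟨c, rfl⟩
    · exact Or.inr ⟨c, rfl⟩
  have hEQ : Set.range ⇑f ∩ (gknClique k n false l ∪ gknClique k n true l) =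
      {F (1 + (l : ℕ)), F (4 * k + 1 - (l : ℕ))} := by
    apply Set.Subset.antisymm
    · rintro v ⟨⟨p, rfl⟩, hv⟩
      obtain ⟨bb, aa, hvl⟩ : ∃ bb aa, f p = Sum.inl (bb, l, aa) := by
        rcases hv with ⟨aa, h⟩ | ⟨aa, h⟩
        exacts [⟨false, aa, h⟩, ⟨true, aa, h⟩]
      have hfp : f p = F (p : ℕ) := by
        rw [hF (p : ℕ) p.isLt]
      rcases hmem p bb aa hvl with h | h <;> rw [hfp, h]
      · exact Set.mem_insert _ _
      · exact Set.mem_insert_of_mem _ rfl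
    · intro v hvv
      simp only [Set.mem_insert_iff, Set.mem_singleton_iff] at hvv
      have hxin : F (1 + (l : ℕ)) ∈
          Set.range ⇑f ∩ (gknClique k n false l ∪ gknClique k n true l) := by
        refine ⟨⟨⟨1 + (l : ℕ), by omega⟩, (hF _ (by omega)).symm⟩, ?_⟩
        rcases hcase with ⟨hx, -⟩ | ⟨hx, -⟩ <;> rw [hx] <;> exact hclmem _ _
      have hyin : F (4 * k + 1 - (l : ℕ)) ∈
          Set.range ⇑f ∩ (gknClique k n false l ∪ gknClique k n true l) := by
        refine ⟨⟨⟨4 * k + 1 - (l : ℕ), by omega⟩, (hF _ (by omega)).symm⟩, ?_⟩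
        rcases hcase with ⟨-, hy⟩ | ⟨-, hy⟩ <;> rw [hy] <;> exact hclmem _ _
      rcases hvv with rfl | rfl
      exacts [hxin, hyin]
  rcases hcase with ⟨hx, hy⟩ | ⟨hx, hy⟩
  · cases b
    · left; rw [hEQ, hx, hy]; simp
    · right; rw [hEQ, hx, hy, Set.pair_comm]; simp
  · cases b
    · right; rw [hEQ, hx, hy]; simp
    · left; rw [hEQ, hx, hy, Set.pair_comm]; simp
end

section
/- Let G be a simple graph on n ≥ 2 vertices, let d be an integer with 0 < d < n, and let 𝒫 be a finite set of size d (the set of 'pieces'). Then there exists an assignment f mapping each vertex v of G to a subset f(v) ⊆ 𝒫 with |f(v)| ≤ ⌈3 ln n⌉, such that for every vertex u of degree at least d, every piece p ∈ 𝒫 belongs to f(v) for some v in the closed neighborhood N[u] of u. -/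
/-!
Give every vertex `s = ⌈3 ln n⌉` pieces, drawn uniformly and independently with repetition. A
vertex `u` of degree at least `d` has at least `(d + 1) s` draws in `N[u]`, so a fixed piece is
missed there with probability at most `(1 - 1/d)^((d + 1) s) ≤ e^(-s) ≤ n^(-3)`. A union bound over
the at most `n d` pairs `(u, p)` leaves a positive probability that no piece is missed anywhere;
the argument is run as a count of the assignments `V × Fin s → pieces`.
-/

open Finset

theorem card_filter_forall_ne {ι β : Type*} [Fintype ι] [DecidableEq ι] [Fintype β]
    [DecidableEq β] [Nonempty β] (S : Finset ι) (b : β) :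
    (#{g : ι → β | ∀ i ∈ S, g i ≠ b} : ℝ) =
      (1 - (Fintype.card β : ℝ)⁻¹) ^ #S * Fintype.card β ^ Fintype.card ι := by
  have hfilter : ({g : ι → β | ∀ i ∈ S, g i ≠ b} : Finset (ι → β)) =
      Fintype.piFinset fun i => if i ∈ S then univ.erase b else univ := by
    ext g
    simp only [mem_filter, mem_univ, true_and, Fintype.mem_piFinset]
    refine ⟨fun h i => ?_, fun h i hi => by simpa [hi] using h i⟩
    by_cases hi : i ∈ S <;> simp [hi, h]
  have hk : (Fintype.card β : ℝ) ≠ 0 := by positivity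
  rw [hfilter, Fintype.card_piFinset]
  simp only [apply_ite card, prod_ite, prod_const, filter_mem_eq_inter, univ_inter,
    card_erase_of_mem (mem_univ b), card_univ, filter_not, ← compl_eq_univ_sdiff, card_compl]
  rw [← Nat.sub_add_cancel (card_le_univ S)]
  push_cast [Nat.cast_sub Fintype.card_pos]
  rw [Nat.add_sub_cancel, pow_add, ← mul_assoc, mul_right_comm, ← mul_pow, sub_mul,
    inv_mul_cancel₀ hk, one_mul]

theorem exists_forall_notMem_of_sum_card_lt {ι Ω : Type*} [Fintype Ω] [DecidableEq Ω]
    (T : Finset ι) (B : ι → Finset Ω) (h : ∑ t ∈ T, (#(B t) : ℝ) < Fintype.card Ω) :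
    ∃ ω, ∀ t ∈ T, ω ∉ B t := by
  by_contra! hcover
  have huniv : (univ : Finset Ω) ⊆ T.biUnion B := fun ω _ => by simpa using hcover ω
  have : (Fintype.card Ω : ℝ) ≤ ∑ t ∈ T, (#(B t) : ℝ) := by
    exact_mod_cast (card_le_card huniv).trans card_biUnion_le
  linarith

theorem mul_mul_one_sub_inv_pow_lt_one {n d s : ℕ} (hd0 : 0 < d) (hdn : d < n)
    (hs : 3 * Real.log n ≤ s) : (n : ℝ) * d * (1 - (d : ℝ)⁻¹) ^ ((d + 1) * s) < 1 := by
  have hnR : (0 : ℝ) < n := by exact_mod_cast hd0.trans hdn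
  have hdn' : (d : ℝ) < n := by exact_mod_cast hdn
  have hn1 : (1 : ℝ) ≤ n := by exact_mod_cast hd0.trans hdn
  have h0 : 0 ≤ 1 - (d : ℝ)⁻¹ := sub_nonneg.mpr (inv_le_one_of_one_le₀ (by exact_mod_cast hd0))
  have hbase : (1 - (d : ℝ)⁻¹) ^ d ≤ Real.exp (-1) := by
    simpa [one_div] using
      Real.one_sub_div_pow_le_exp_neg (n := d) (t := 1) (by exact_mod_cast hd0)
  have hpow : (1 - (d : ℝ)⁻¹) ^ ((d + 1) * s) ≤ ((n : ℝ) ^ 3)⁻¹ :=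
    calc (1 - (d : ℝ)⁻¹) ^ ((d + 1) * s)
        ≤ ((1 - (d : ℝ)⁻¹) ^ d) ^ s := by
          rw [← pow_mul]
          exact pow_le_pow_of_le_one h0 (by simp) (by nlinarith)
      _ ≤ Real.exp (-1) ^ s := by gcongr
      _ = Real.exp (-s) := by rw [← Real.exp_nat_mul]; ring_nf
      _ ≤ Real.exp (-(3 * Real.log n)) := by gcongr
      _ = ((n : ℝ) ^ 3)⁻¹ := by
          rw [Real.exp_neg, show 3 * Real.log n = Real.log (n ^ 3) by norm_num [Real.log_pow],
            Real.exp_log (by positivity)]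
  calc (n : ℝ) * d * (1 - (d : ℝ)⁻¹) ^ ((d + 1) * s) ≤ n * d * ((n : ℝ) ^ 3)⁻¹ := by gcongr
    _ < 1 := by
      rw [← div_eq_mul_inv, div_lt_one (by positivity)]
      nlinarith [mul_lt_mul_of_pos_left hdn' hnR,
        mul_le_mul_of_nonneg_left hn1 (sq_nonneg (n : ℝ))]

namespace SimpleGraph

variable {V : Type*} [Fintype V] [DecidableEq V] (G : SimpleGraph V) [DecidableRel G.Adj]

def closedNeighborFinset (u : V) : Finset V := insert u (G.neighborFinset u)

theorem mem_closedNeighborFinset {u v : V} :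
    v ∈ G.closedNeighborFinset u ↔ v = u ∨ G.Adj u v := by
  simp [closedNeighborFinset]

theorem card_closedNeighborFinset (u : V) : #(G.closedNeighborFinset u) = G.degree u + 1 := by
  rw [closedNeighborFinset, card_insert_of_notMem (G.notMem_neighborFinset_self u),
    card_neighborFinset_eq_degree]

theorem exists_forall_closedNeighborFinset_covers {β : Type*} [Fintype β] [Nonempty β]
    (d s : ℕ) (h : (Fintype.card V : ℝ) * Fintype.card β *
      (1 - (Fintype.card β : ℝ)⁻¹) ^ ((d + 1) * s) < 1) :
    ∃ g : V × Fin s → β, ∀ u, d ≤ G.degree u → ∀ b,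
      ∃ v ∈ G.closedNeighborFinset u, ∃ i, g (v, i) = b := by
  classical
  set q : ℝ := 1 - (Fintype.card β : ℝ)⁻¹
  set N : ℝ := (Fintype.card (V × Fin s → β) : ℝ) with hN
  have hq0 : 0 ≤ q := sub_nonneg.mpr (inv_le_one_of_one_le₀ (by exact_mod_cast Fintype.card_pos))
  have hq : q ≤ 1 := sub_le_self _ (by positivity)
  let bad : V × β → Finset (V × Fin s → β) := fun ub =>
    {g | ∀ x ∈ G.closedNeighborFinset ub.1 ×ˢ univ, g x ≠ ub.2}
  have hbad : ∀ u, d ≤ G.degree u → ∀ b, (#(bad (u, b)) : ℝ) ≤ q ^ ((d + 1) * s) * N := by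
    intro u hu b
    have hcard : (d + 1) * s ≤ #(G.closedNeighborFinset u ×ˢ (univ : Finset (Fin s))) := by
      rw [card_product, card_closedNeighborFinset, card_univ, Fintype.card_fin]
      gcongr
    rw [card_filter_forall_ne, hN, Fintype.card_fun, Nat.cast_pow]
    exact mul_le_mul_of_nonneg_right (pow_le_pow_of_le_one hq0 hq hcard) (by positivity)
  let T : Finset (V × β) := univ.filter (fun u => d ≤ G.degree u) ×ˢ univ
  have hT : (#T : ℝ) ≤ Fintype.card V * Fintype.card β := by
    rw [card_product, card_univ]
    exact_mod_cast Nat.mul_le_mul_right _ (card_filter_le _ _)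
  obtain ⟨g, hg⟩ := exists_forall_notMem_of_sum_card_lt T bad <|
    calc ∑ ub ∈ T, (#(bad ub) : ℝ)
        ≤ ∑ ub ∈ T, q ^ ((d + 1) * s) * N :=
          sum_le_sum fun ub hub => by
            obtain ⟨hu, -⟩ := mem_product.mp hub
            exact hbad ub.1 (mem_filter.mp hu).2 ub.2
      _ ≤ Fintype.card V * Fintype.card β * q ^ ((d + 1) * s) * N := by
          rw [sum_const, nsmul_eq_mul, ← mul_assoc]
          gcongr
      _ < N := (mul_lt_mul_of_pos_right h (by positivity)).trans_eq (one_mul N)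
  refine ⟨g, fun u hu b => ?_⟩
  by_contra! hmiss
  exact hg (u, b) (by simp [T, hu])
    (mem_filter.mpr ⟨mem_univ _, fun x hx => hmiss x.1 (mem_product.mp hx).1 x.2⟩)

end SimpleGraph

theorem coupon_collector_assignment_general
    {V α : Type*} [Fintype V] (G : SimpleGraph V) [DecidableRel G.Adj]
    (d : ℕ) (hd0 : 0 < d) (hdn : d < Fintype.card V)
    (pieces : Finset α) (hP : pieces.card = d) :
    ∃ f : V → Finset α,
      (∀ v : V, f v ⊆ pieces ∧ (f v).card ≤ ⌈(3 : ℝ) * Real.log (Fintype.card V)⌉₊) ∧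
      (∀ u : V, d ≤ G.degree u → ∀ p ∈ pieces, ∃ v : V, (v = u ∨ G.Adj u v) ∧ p ∈ f v) := by
  classical
  have hcard : Fintype.card pieces = d := by rw [Fintype.card_coe, hP]
  have : Nonempty pieces := Fintype.card_pos_iff.mp (hcard ▸ hd0)
  obtain ⟨g, hg⟩ := G.exists_forall_closedNeighborFinset_covers (β := pieces) d
    ⌈(3 : ℝ) * Real.log (Fintype.card V)⌉₊
    (by rw [hcard]; exact mul_mul_one_sub_inv_pow_lt_one hd0 hdn (Nat.le_ceil _))
  refine ⟨fun v => univ.image fun i => (g (v, i) : α), fun v => ⟨?_, ?_⟩, fun u hu p hp => ?_⟩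
  · exact image_subset_iff.mpr fun i _ => (g (v, i)).2
  · exact card_image_le.trans (by simp)
  · obtain ⟨v, hv, i, hi⟩ := hg u hu ⟨p, hp⟩
    exact ⟨v, G.mem_closedNeighborFinset.mp hv, mem_image.mpr ⟨i, mem_univ _, by rw [hi]⟩⟩

/-- coupon-collector lemma: let `G` be a simple graph on `n ≥ 2` vertices,
`0 < d < n`, and let `pieces` be a finite set of `d` pieces. Then one can assign to each
vertex `v` a subset `f v ⊆ pieces` with `|f v| ≤ ⌈3 ln n⌉` so that for every vertex `u` of
degree at least `d`, every piece appears at some vertex of the closed neighbourhood of `u`. -/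
theorem coupon_collector_assignment
    {V α : Type*} [Fintype V] (G : SimpleGraph V) [DecidableRel G.Adj]
    (hn : 2 ≤ Fintype.card V)
    (d : ℕ) (hd0 : 0 < d) (hdn : d < Fintype.card V)
    (pieces : Finset α) (hP : pieces.card = d) :
    ∃ f : V → Finset α,
      (∀ v : V, f v ⊆ pieces ∧ (f v).card ≤ ⌈(3 : ℝ) * Real.log (Fintype.card V)⌉₊) ∧
      (∀ u : V, d ≤ G.degree u → ∀ p ∈ pieces, ∃ v : V, (v = u ∨ G.Adj u v) ∧ p ∈ f v) :=
  coupon_collector_assignment_general G d hd0 hdn pieces hP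
end

section
/- Let k ≥ 1 and let 𝒞 be a family of vertex sets of a simple graph G such that any two distinct members of 𝒞 are at distance at least 2k-1 from each other in G. If P is a path in G on at most 4k-1 vertices, then at most two members C of 𝒞 satisfy |V(P) ∩ C| ≥ 2; moreover, if there are exactly two members of 𝒞 that intersect P in at least two vertices each, then P contains no vertex of any other member of 𝒞. -/
/-- let `k ≥ 1` and let `𝓒` be a family of vertex sets of a simple graph
`G`, any two distinct members of which are at distance at least `2k-1` (every walk between
them has length at least `2k-1`). If `P` is a path on `m ≤ 4k-1` vertices (given as an
injective sequence `f` of consecutive adjacent vertices), then at most two members `C` of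
`𝓒` satisfy `|V(P) ∩ C| ≥ 2`; moreover if exactly two members intersect `P` in at least two
vertices each, then `P` contains no vertex of any other member. -/
theorem path_meets_atMostTwo_far_sets
    {W : Type*} (G : SimpleGraph W) (k : ℕ) (hk : 1 ≤ k)
    (Cs : Set (Set W))
    (hfar : ∀ C ∈ Cs, ∀ C' ∈ Cs, C ≠ C' →
      ∀ u ∈ C, ∀ v ∈ C', ∀ p : G.Walk u v, 2 * k - 1 ≤ p.length)
    (m : ℕ) (hm : m ≤ 4 * k - 1) (f : ℕ → W)
    (hinj : ∀ s t : ℕ, s < t → t < m → f s ≠ f t)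
    (hadj : ∀ t : ℕ, t + 1 < m → G.Adj (f t) (f (t + 1))) :
    (¬ ∃ C₁ ∈ Cs, ∃ C₂ ∈ Cs, ∃ C₃ ∈ Cs, C₁ ≠ C₂ ∧ C₁ ≠ C₃ ∧ C₂ ≠ C₃ ∧
        2 ≤ {v ∈ C₁ | ∃ t < m, f t = v}.ncard ∧
        2 ≤ {v ∈ C₂ | ∃ t < m, f t = v}.ncard ∧
        2 ≤ {v ∈ C₃ | ∃ t < m, f t = v}.ncard) ∧
    (∀ C₁ ∈ Cs, ∀ C₂ ∈ Cs, C₁ ≠ C₂ →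
        2 ≤ {v ∈ C₁ | ∃ t < m, f t = v}.ncard →
        2 ≤ {v ∈ C₂ | ∃ t < m, f t = v}.ncard →
        ∀ C ∈ Cs, C ≠ C₁ → C ≠ C₂ → ∀ v ∈ C, ¬ ∃ t < m, f t = v) := by
  -- walks along the path
  have walk : ∀ d s : ℕ, s + d < m → ∃ p : G.Walk (f s) (f (s + d)), p.length = d := by
    intro d
    induction d with
    | zero => intro s _; exact ⟨SimpleGraph.Walk.nil, rfl⟩
    | succ n ih =>
      intro s hs
      obtain ⟨p, hp⟩ := ih (s + 1) (by omega)
      have e : s + 1 + n = s + (n + 1) := by omega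
      exact ⟨SimpleGraph.Walk.cons (hadj s (by omega)) (p.copy rfl (congrArg f e)),
        by simp [hp]⟩
  -- separation in indices
  have hsep : ∀ C ∈ Cs, ∀ C' ∈ Cs, C ≠ C' → ∀ s t : ℕ, s < m → t < m →
      f s ∈ C → f t ∈ C' → s + (2 * k - 1) ≤ t ∨ t + (2 * k - 1) ≤ s := by
    intro C hC C' hC' hne s t hs ht hfs hft
    rcases le_total s t with h | h
    · obtain ⟨p, hp⟩ := walk (t - s) s (by omega)
      have e : s + (t - s) = t := by omega
      have := hfar C hC C' hC' hne _ hfs _ hft (p.copy rfl (congrArg f e))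
      rw [SimpleGraph.Walk.length_copy, hp] at this
      omega
    · obtain ⟨p, hp⟩ := walk (s - t) t (by omega)
      have e : t + (s - t) = s := by omega
      have := hfar C' hC' C hC (Ne.symm hne) _ hft _ hfs (p.copy rfl (congrArg f e))
      rw [SimpleGraph.Walk.length_copy, hp] at this
      omega
  -- extraction from ncard ≥ 2
  have hext : ∀ C : Set W, 2 ≤ {v ∈ C | ∃ t < m, f t = v}.ncard →
      ∃ s t : ℕ, s < m ∧ t < m ∧ s ≠ t ∧ f s ∈ C ∧ f t ∈ C := by
    intro C hC
    have hfin : {v ∈ C | ∃ t < m, f t = v}.Finite := by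
      by_contra h
      rw [Set.Infinite.ncard h] at hC
      omega
    obtain ⟨a, b, ha, hb, hab⟩ := (Set.one_lt_ncard_iff hfin).mp (by omega)
    obtain ⟨haC, s, hs, hfs⟩ := ha
    obtain ⟨hbC, t, ht, hft⟩ := hb
    refine ⟨s, t, hs, ht, ?_, hfs ▸ haC, hft ▸ hbC⟩
    rintro rfl
    exact hab (hfs ▸ hft ▸ rfl)
  constructor
  · rintro ⟨C₁, hC₁, C₂, hC₂, C₃, hC₃, h12, h13, h23, n1, n2, n3⟩
    obtain ⟨a1, a2, ha1, ha2, ha, hfa1, hfa2⟩ := hext C₁ n1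
    obtain ⟨b1, b2, hb1, hb2, hb, hfb1, hfb2⟩ := hext C₂ n2
    obtain ⟨c1, c2, hc1, hc2, hc, hfc1, hfc2⟩ := hext C₃ n3
    have d1 := hsep C₁ hC₁ C₂ hC₂ h12 a1 b1 ha1 hb1 hfa1 hfb1
    have d2 := hsep C₁ hC₁ C₃ hC₃ h13 a1 c1 ha1 hc1 hfa1 hfc1
    have d3 := hsep C₂ hC₂ C₃ hC₃ h23 b1 c1 hb1 hc1 hfb1 hfc1
    have d4 := hsep C₁ hC₁ C₂ hC₂ h12 a2 b1 ha2 hb1 hfa2 hfb1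
    have d5 := hsep C₁ hC₁ C₃ hC₃ h13 a2 c1 ha2 hc1 hfa2 hfc1
    have d6 := hsep C₁ hC₁ C₂ hC₂ h12 a1 b2 ha1 hb2 hfa1 hfb2
    have d7 := hsep C₂ hC₂ C₃ hC₃ h23 b2 c1 hb2 hc1 hfb2 hfc1
    have d8 := hsep C₁ hC₁ C₃ hC₃ h13 a1 c2 ha1 hc2 hfa1 hfc2
    have d9 := hsep C₂ hC₂ C₃ hC₃ h23 b1 c2 hb1 hc2 hfb1 hfc2
    omega
  · rintro C₁ hC₁ C₂ hC₂ h12 n1 n2 C hC hc1 hc2 v hv ⟨t, ht, hft⟩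
    obtain ⟨a1, a2, ha1, ha2, ha, hfa1, hfa2⟩ := hext C₁ n1
    obtain ⟨b1, b2, hb1, hb2, hb, hfb1, hfb2⟩ := hext C₂ n2
    have hftC : f t ∈ C := hft ▸ hv
    have d1 := hsep C₁ hC₁ C₂ hC₂ h12 a1 b1 ha1 hb1 hfa1 hfb1
    have d2 := hsep C hC C₁ hC₁ hc1 t a1 ht ha1 hftC hfa1
    have d3 := hsep C hC C₂ hC₂ hc2 t b1 ht hb1 hftC hfb1
    have d4 := hsep C₁ hC₁ C₂ hC₂ h12 a2 b1 ha2 hb1 hfa2 hfb1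
    have d5 := hsep C hC C₁ hC₁ hc1 t a2 ht ha2 hftC hfa2
    have d6 := hsep C₁ hC₁ C₂ hC₂ h12 a1 b2 ha1 hb2 hfa1 hfb2
    have d7 := hsep C hC C₂ hC₂ hc2 t b2 ht hb2 hftC hfb2
    omega
end

section
/- Let k ≥ 1 and let S, S' be vertex sets of a simple graph G at distance at least 2k-1 from each other. Suppose P is a path in G on at most 4k-1 vertices containing at least two vertices of S and at least two vertices of S'. Then for every d ∈ {0,…,k-1}, P contains a vertex of S(d) and a vertex of S'(d); and there exist X ∈ {S, S'} and d ∈ {1,…,k-1} such that P contains exactly one vertex of X(d). -/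
/-- The set of vertices of `G` at distance exactly `d` from the vertex set `S`:
there is a walk of length `d` to some vertex of `S`, and no shorter walk to any
vertex of `S`. -/
def exactDistSet {W : Type*} (G : SimpleGraph W) (S : Set W) (d : ℕ) : Set W :=
  {v | (∃ u ∈ S, ∃ p : G.Walk v u, p.length = d) ∧
       ∀ u ∈ S, ∀ p : G.Walk v u, d ≤ p.length}

private lemma ivt_up (g : ℕ → ℕ) :
    ∀ n a, (∀ t, a ≤ t → t < a + n → g (t + 1) ≤ g t + 1) →
      ∀ d, g a ≤ d → d ≤ g (a + n) → ∃ t, a ≤ t ∧ t ≤ a + n ∧ g t = d := by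
  intro n
  induction n with
  | zero => exact fun a _ d h1 h2 => ⟨a, le_refl _, le_refl _, le_antisymm h1 h2⟩
  | succ n ih =>
    intro a hstep d h1 h2
    rcases eq_or_lt_of_le h1 with h | h
    · exact ⟨a, le_refl _, Nat.le_add_right _ _, h⟩
    · have hga1 : g (a + 1) ≤ d := le_trans (hstep a (le_refl _) (by omega)) h
      have h2' : d ≤ g (a + 1 + n) := by
        have : a + 1 + n = a + (n + 1) := by omega
        rwa [this]
      obtain ⟨t, ht1, ht2, ht3⟩ :=
        ih (a + 1) (fun t hta htb => hstep t (by omega) (by omega)) d hga1 h2'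
      exact ⟨t, by omega, by omega, ht3⟩

private lemma ivt_down (g : ℕ → ℕ) :
    ∀ n a, (∀ t, a ≤ t → t < a + n → g t ≤ g (t + 1) + 1) →
      ∀ d, d ≤ g a → g (a + n) ≤ d → ∃ t, a ≤ t ∧ t ≤ a + n ∧ g t = d := by
  intro n
  induction n with
  | zero => exact fun a _ d h1 h2 => ⟨a, le_refl _, le_refl _, le_antisymm h2 h1⟩
  | succ n ih =>
    intro a hstep d h1 h2
    rcases eq_or_lt_of_le h1 with h | h
    · exact ⟨a, le_refl _, Nat.le_add_right _ _, h.symm⟩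
    · have hga1 : d ≤ g (a + 1) := by
        have := hstep a (le_refl _) (by omega)
        omega
      have h2' : g (a + 1 + n) ≤ d := by
        have : a + 1 + n = a + (n + 1) := by omega
        rwa [this]
      obtain ⟨t, ht1, ht2, ht3⟩ :=
        ih (a + 1) (fun t hta htb => hstep t (by omega) (by omega)) d hga1 h2'
      exact ⟨t, by omega, by omega, ht3⟩

private lemma exactDistSet_zero {W : Type*} (G : SimpleGraph W) (S : Set W) :
    exactDistSet G S 0 = S := by
  ext v
  constructor
  · rintro ⟨⟨u, hu, p, hp⟩, -⟩
    rwa [SimpleGraph.Walk.eq_of_length_eq_zero hp]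
  · intro hv
    exact ⟨⟨v, hv, SimpleGraph.Walk.nil, rfl⟩, fun u hu p => Nat.zero_le _⟩

/-- A vertex lies in at most one exact-distance layer of a fixed set. -/
private lemma exactDistSet_layers_eq {W : Type*} (G : SimpleGraph W) (S : Set W)
    {d d' : ℕ} {v : W} (h : v ∈ exactDistSet G S d) (h' : v ∈ exactDistSet G S d') :
    d = d' := by
  obtain ⟨⟨u, hu, p, hp⟩, hlow⟩ := h
  obtain ⟨⟨u', hu', p', hp'⟩, hlow'⟩ := h'
  have h1 := hlow u' hu' p'
  have h2 := hlow' u hu p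
  omega

/-- Layers of `S` and `S'` with small indices are disjoint when `S, S'` are far apart. -/
private lemma exactDistSet_cross_disjoint {W : Type*} (G : SimpleGraph W) (k : ℕ)
    (S S' : Set W)
    (hfar : ∀ u ∈ S, ∀ v ∈ S', ∀ p : G.Walk u v, 2 * k - 1 ≤ p.length)
    {d d' : ℕ} (hd : d + d' < 2 * k - 1) {v : W}
    (h : v ∈ exactDistSet G S d) (h' : v ∈ exactDistSet G S' d') : False := by
  obtain ⟨⟨u, hu, p, hp⟩, -⟩ := h
  obtain ⟨⟨u', hu', p', hp'⟩, -⟩ := h'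
  have := hfar u hu u' hu' (p.reverse.append p')
  rw [SimpleGraph.Walk.length_append, SimpleGraph.Walk.length_reverse, hp, hp'] at this
  omega

private lemma part1_aux {W : Type*} (G : SimpleGraph W) (k : ℕ) (hk : 1 ≤ k)
    (S S' : Set W)
    (hfar : ∀ u ∈ S, ∀ v ∈ S', ∀ p : G.Walk u v, 2 * k - 1 ≤ p.length)
    (m : ℕ) (f : ℕ → W)
    (hadj : ∀ t : ℕ, t + 1 < m → G.Adj (f t) (f (t + 1)))
    (t0 t1 : ℕ) (ht0 : t0 < m) (ht1 : t1 < m) (h0 : f t0 ∈ S) (h1 : f t1 ∈ S')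
    {d : ℕ} (hd : d < k) : ∃ t < m, f t ∈ exactDistSet G S d := by
  set A : W → Set ℕ := fun v => {n | ∃ u ∈ S, ∃ p : G.Walk v u, p.length = n} with hA_def
  -- walks along the path
  have hpath : ∀ n s, s + n < m → Nonempty (G.Walk (f s) (f (s + n))) := by
    intro n
    induction n with
    | zero => exact fun s _ => ⟨SimpleGraph.Walk.nil⟩
    | succ n ih =>
      intro s hs
      obtain ⟨p⟩ := ih (s + 1) (by omega)
      have he : s + 1 + n = s + (n + 1) := by omega
      rw [he] at p
      exact ⟨SimpleGraph.Walk.cons (hadj s (by omega)) p⟩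
  have hconn : ∀ s t, s < m → t < m → Nonempty (G.Walk (f s) (f t)) := by
    intro s t hs ht
    rcases le_total s t with h | h
    · have := hpath (t - s) s (by omega)
      rwa [show s + (t - s) = t by omega] at this
    · obtain ⟨p⟩ := hpath (s - t) t (by omega)
      rw [show t + (s - t) = s by omega] at p
      exact ⟨p.reverse⟩
  have hAne : ∀ t, t < m → (A (f t)).Nonempty := by
    intro t ht
    obtain ⟨q⟩ := hconn t t0 ht ht0
    exact ⟨q.length, f t0, h0, q, rfl⟩
  set g : ℕ → ℕ := fun t => sInf (A (f t)) with hg_def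
  have hgeq : ∀ t, g t = sInf (A (f t)) := fun _ => rfl
  -- step bound in both directions
  have hstep : ∀ v w : W, G.Adj v w → (A w).Nonempty → sInf (A v) ≤ sInf (A w) + 1 := by
    intro v w hvw hne
    obtain ⟨u, hu, p, hp⟩ := Nat.sInf_mem hne
    have : sInf (A w) + 1 ∈ A v := ⟨u, hu, SimpleGraph.Walk.cons hvw p, by simp [hp]⟩
    exact Nat.sInf_le this
  have hstep_up : ∀ t, t + 1 < m → g (t + 1) ≤ g t + 1 := by
    intro t ht
    exact hstep (f (t + 1)) (f t) (hadj t ht).symm (hAne t (by omega))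
  have hstep_down : ∀ t, t + 1 < m → g t ≤ g (t + 1) + 1 := by
    intro t ht
    exact hstep (f t) (f (t + 1)) (hadj t ht) (hAne (t + 1) ht)
  have hg0 : g t0 = 0 := by
    have h' : (0 : ℕ) ∈ A (f t0) := ⟨f t0, h0, SimpleGraph.Walk.nil, rfl⟩
    have h'' := Nat.sInf_le h'
    rw [hgeq]
    omega
  have hg1 : 2 * k - 1 ≤ g t1 := by
    obtain ⟨u, hu, p, hp⟩ := Nat.sInf_mem (hAne t1 ht1)
    have := hfar u hu (f t1) h1 p.reverse
    rw [SimpleGraph.Walk.length_reverse, hp] at this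
    rw [hgeq]
    exact this
  have hd1 : d ≤ 2 * k - 1 := by omega
  have key : ∃ t, t < m ∧ g t = d := by
    rcases le_total t0 t1 with h | h
    · obtain ⟨t, ht1', ht2', ht3'⟩ := ivt_up g (t1 - t0) t0
        (fun t hta htb => hstep_up t (by omega)) d (by omega)
        (by rw [show t0 + (t1 - t0) = t1 by omega]; omega)
      exact ⟨t, by omega, ht3'⟩
    · obtain ⟨t, ht1', ht2', ht3'⟩ := ivt_down g (t0 - t1) t1
        (fun t hta htb => hstep_down t (by omega)) d (by omega)
        (by rw [show t1 + (t0 - t1) = t0 by omega]; omega)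
      exact ⟨t, by omega, ht3'⟩
  obtain ⟨t, htm, htg⟩ := key
  rw [hgeq] at htg
  refine ⟨t, htm, ?_, ?_⟩
  · have h' := Nat.sInf_mem (hAne t htm)
    rw [htg] at h'
    exact h'
  · intro u hu p
    have h' : p.length ∈ A (f t) := ⟨u, hu, p, rfl⟩
    have h'' := Nat.sInf_le h'
    omega

/-- let `k ≥ 1` and let `S, S'` be vertex sets of `G` at distance at
least `2k-1` from each other. If `P` is a path on `m ≤ 4k-1` vertices containing at least
two vertices of `S` and at least two of `S'`, then for every `d ∈ {0,…,k-1}`, `P` contains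
a vertex of `S(d)` and a vertex of `S'(d)`; and there exist `X ∈ {S, S'}` and
`d ∈ {1,…,k-1}` such that `P` contains exactly one vertex of `X(d)`. -/
theorem path_between_far_sets_unique_distance_layer
    {W : Type*} (G : SimpleGraph W) (k : ℕ) (hk : 1 ≤ k)
    (S S' : Set W)
    (hfar : ∀ u ∈ S, ∀ v ∈ S', ∀ p : G.Walk u v, 2 * k - 1 ≤ p.length)
    (m : ℕ) (hm : m ≤ 4 * k - 1) (f : ℕ → W)
    (hinj : ∀ s t : ℕ, s < t → t < m → f s ≠ f t)
    (hadj : ∀ t : ℕ, t + 1 < m → G.Adj (f t) (f (t + 1)))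
    (hS : 2 ≤ {v ∈ S | ∃ t < m, f t = v}.ncard)
    (hS' : 2 ≤ {v ∈ S' | ∃ t < m, f t = v}.ncard) :
    (∀ d < k, (∃ t < m, f t ∈ exactDistSet G S d) ∧ (∃ t < m, f t ∈ exactDistSet G S' d)) ∧
    (∃ X, (X = S ∨ X = S') ∧ ∃ d, 1 ≤ d ∧ d ≤ k - 1 ∧
        {v ∈ exactDistSet G X d | ∃ t < m, f t = v}.ncard = 1) := by
  classical
  have hfar' : ∀ u ∈ S', ∀ v ∈ S, ∀ p : G.Walk u v, 2 * k - 1 ≤ p.length := by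
    intro u hu v hv p
    have := hfar v hv u hu p.reverse
    rwa [SimpleGraph.Walk.length_reverse] at this
  -- finiteness of trace sets
  have hFin : ∀ X : Set W, ({v ∈ X | ∃ t < m, f t = v}).Finite := by
    intro X
    apply ((Set.finite_Iio m).image f).subset
    rintro v ⟨-, t, ht, rfl⟩
    exact ⟨t, ht, rfl⟩
  -- injectivity restated
  have hinj' : ∀ s t, s < m → t < m → f s = f t → s = t := by
    intro s t hs ht h
    by_contra hne
    rcases Nat.lt_or_ge s t with h' | h'
    · exact hinj s t h' ht h
    · exact hinj t s (by omega) hs h.symm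
  -- two base points
  obtain ⟨v1, v2, hv1, hv2, hv12⟩ := (Set.one_lt_ncard_iff (hFin S)).mp (by omega)
  obtain ⟨w1, w2, hw1, hw2, hw12⟩ := (Set.one_lt_ncard_iff (hFin S')).mp (by omega)
  obtain ⟨hv1S, s1, hs1, hfs1⟩ := hv1
  obtain ⟨hv2S, s2, hs2, hfs2⟩ := hv2
  obtain ⟨hw1S, r1, hr1, hfr1⟩ := hw1
  obtain ⟨hw2S, r2, hr2, hfr2⟩ := hw2
  have part1 : ∀ d < k, (∃ t < m, f t ∈ exactDistSet G S d) ∧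
      (∃ t < m, f t ∈ exactDistSet G S' d) := by
    intro d hd
    constructor
    · exact part1_aux G k hk S S' hfar m f hadj s1 r1 hs1 hr1
        (hfs1 ▸ hv1S) (hfr1 ▸ hw1S) hd
    · exact part1_aux G k hk S' S hfar' m f hadj r1 s1 hr1 hs1
        (hfr1 ▸ hw1S) (hfs1 ▸ hv1S) hd
  refine ⟨part1, ?_⟩
  by_contra hcon
  push_neg at hcon
  -- index sets
  set I : Set W → ℕ → Finset ℕ :=
    fun X d => (Finset.range m).filter (fun t => f t ∈ exactDistSet G X d) with hI_def
  -- each layer set of indices with 1 ≤ d ≤ k-1 has at least two elements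
  have htwo : ∀ X, (X = S ∨ X = S') → ∀ d, 1 ≤ d → d ≤ k - 1 → 2 ≤ (I X d).card := by
    intro X hX d hd1 hd2
    have hTfin : ({v ∈ exactDistSet G X d | ∃ t < m, f t = v}).Finite := hFin _
    have hTne : ({v ∈ exactDistSet G X d | ∃ t < m, f t = v}).Nonempty := by
      have hdk : d < k := by omega
      obtain ⟨t, htm, hmem⟩ : ∃ t < m, f t ∈ exactDistSet G X d := by
        rcases hX with rfl | rfl
        · exact (part1 d hdk).1
        · exact (part1 d hdk).2
      exact ⟨f t, hmem, t, htm, rfl⟩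
    have hne1 := hcon X hX d hd1 hd2
    have h2 : 2 ≤ ({v ∈ exactDistSet G X d | ∃ t < m, f t = v}).ncard := by
      have := (Set.ncard_pos hTfin).mpr hTne
      omega
    obtain ⟨a, b, ha, hb, hab⟩ := (Set.one_lt_ncard_iff hTfin).mp (by omega)
    obtain ⟨haX, ta, hta, hfta⟩ := ha
    obtain ⟨hbX, tb, htb, hftb⟩ := hb
    have htatb : ta ≠ tb := fun h => hab (by rw [← hfta, ← hftb, h])
    have hmemta : ta ∈ I X d := by
      simp only [hI_def, Finset.mem_filter, Finset.mem_range]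
      exact ⟨hta, by rw [hfta]; exact haX⟩
    have hmemtb : tb ∈ I X d := by
      simp only [hI_def, Finset.mem_filter, Finset.mem_range]
      exact ⟨htb, by rw [hftb]; exact hbX⟩
    exact Finset.one_lt_card.mpr ⟨ta, hmemta, tb, hmemtb, htatb⟩
  -- the d = 0 layers have at least two elements
  have hzeroS : 2 ≤ (I S 0).card := by
    have hne : s1 ≠ s2 := fun h => hv12 (by rw [← hfs1, ← hfs2, h])
    apply Finset.one_lt_card.mpr
    refine ⟨s1, ?_, s2, ?_, hne⟩
    · simp only [hI_def, Finset.mem_filter, Finset.mem_range]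
      exact ⟨hs1, by rw [exactDistSet_zero, hfs1]; exact hv1S⟩
    · simp only [hI_def, Finset.mem_filter, Finset.mem_range]
      exact ⟨hs2, by rw [exactDistSet_zero, hfs2]; exact hv2S⟩
  have hzeroS' : 2 ≤ (I S' 0).card := by
    have hne : r1 ≠ r2 := fun h => hw12 (by rw [← hfr1, ← hfr2, h])
    apply Finset.one_lt_card.mpr
    refine ⟨r1, ?_, r2, ?_, hne⟩
    · simp only [hI_def, Finset.mem_filter, Finset.mem_range]
      exact ⟨hr1, by rw [exactDistSet_zero, hfr1]; exact hw1S⟩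
    · simp only [hI_def, Finset.mem_filter, Finset.mem_range]
      exact ⟨hr2, by rw [exactDistSet_zero, hfr2]; exact hw2S⟩
  -- cross disjointness of index sets
  have hdisjSS' : ∀ d d', d ≤ k - 1 → d' ≤ k - 1 → Disjoint (I S d) (I S' d') := by
    intro d d' hd hd'
    rw [Finset.disjoint_left]
    intro t ht ht'
    simp only [hI_def, Finset.mem_filter, Finset.mem_range] at ht ht'
    exact exactDistSet_cross_disjoint G k S S' hfar (by omega) ht.2 ht'.2
  have hdisj_same : ∀ (X : Set W) d d', d ≠ d' → Disjoint (I X d) (I X d') := by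
    intro X d d' hne
    rw [Finset.disjoint_left]
    intro t ht ht'
    simp only [hI_def, Finset.mem_filter, Finset.mem_range] at ht ht'
    exact hne (exactDistSet_layers_eq G X ht.2 ht'.2)
  set B : ℕ → Finset ℕ := fun d => I S d ∪ I S' d with hB_def
  have hBdisj : ∀ d ∈ Finset.range k, ∀ d' ∈ Finset.range k, d ≠ d' →
      Disjoint (B d) (B d') := by
    intro d hdk d' hdk' hne
    simp only [Finset.mem_range] at hdk hdk'
    simp only [hB_def]
    rw [Finset.disjoint_union_left, Finset.disjoint_union_right,
      Finset.disjoint_union_right]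
    exact ⟨⟨hdisj_same S d d' hne, hdisjSS' d d' (by omega) (by omega)⟩,
      ⟨(hdisjSS' d' d (by omega) (by omega)).symm, hdisj_same S' d d' hne⟩⟩
  have hBcard : ∀ d ∈ Finset.range k, 4 ≤ (B d).card := by
    intro d hdk
    simp only [Finset.mem_range] at hdk
    have hdisj : Disjoint (I S d) (I S' d) := hdisjSS' d d (by omega) (by omega)
    have : (B d).card = (I S d).card + (I S' d).card :=
      Finset.card_union_of_disjoint hdisj
    rw [this]
    rcases Nat.eq_zero_or_pos d with rfl | hd
    · omega
    · have h1 := htwo S (Or.inl rfl) d hd (by omega)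
      have h2 := htwo S' (Or.inr rfl) d hd (by omega)
      omega
  have hsub : (Finset.range k).biUnion B ⊆ Finset.range m := by
    intro t ht
    simp only [Finset.mem_biUnion, hB_def, Finset.mem_union, hI_def,
      Finset.mem_filter] at ht
    obtain ⟨d, -, h | h⟩ := ht <;> exact h.1
  have hcardle : ((Finset.range k).biUnion B).card ≤ m := by
    have := Finset.card_le_card hsub
    simpa using this
  have hcardeq : ((Finset.range k).biUnion B).card = ∑ d ∈ Finset.range k, (B d).card :=
    Finset.card_biUnion hBdisj
  have hsum : (Finset.range k).card * 4 ≤ ∑ d ∈ Finset.range k, (B d).card := by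
    calc (Finset.range k).card * 4 = (Finset.range k).card • 4 := by simp
    _ ≤ ∑ d ∈ Finset.range k, (B d).card := Finset.card_nsmul_le_sum _ _ _ hBcard
  simp only [Finset.card_range] at hsum
  omega
end

section
/- Let k ≥ 2 and let 𝒞 be a family of vertex sets of a simple graph G such that any two distinct members of 𝒞 are at distance at least 2k-1 from each other in G. If P is a path in G on at most ⌈14k/3⌉ − 1 vertices, then P can be written as a concatenation of at most three consecutive subpaths P_1, P_2, P_3 such that each P_i contains vertices of at most one member of 𝒞; in particular, at most three members of 𝒞 contain a vertex of P. -/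
/-- The segment of the vertex sequence `f` on indices `lo ≤ t < hi` contains vertices of at
most one member of the family `Cs`. -/
def segmentTouchesAtMostOne {W : Type*} (Cs : Set (Set W)) (f : ℕ → W) (lo hi : ℕ) : Prop :=
  ∀ C ∈ Cs, ∀ C' ∈ Cs,
    (∃ t, lo ≤ t ∧ t < hi ∧ f t ∈ C) → (∃ t, lo ≤ t ∧ t < hi ∧ f t ∈ C') → C = C'

/-- Auxiliary predicate: index `t` is "bad for `lo`" if some earlier index `s ≥ lo` and `t`
touch two distinct members of `Cs`. -/
def badAt {W : Type*} (Cs : Set (Set W)) (f : ℕ → W) (m lo t : ℕ) : Prop :=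
  t < m ∧ ∃ s C C', lo ≤ s ∧ s < t ∧ C ∈ Cs ∧ C' ∈ Cs ∧ C ≠ C' ∧ f s ∈ C ∧ f t ∈ C'

/-- let `k ≥ 2` and let `Cs` be a family of vertex sets of `G`, any two
distinct members of which are at distance at least `2k-1`. If `P` is a path on
`m ≤ ⌈14k/3⌉ - 1` vertices, then `P` is a concatenation of at most three consecutive
subpaths (index intervals `[0,a)`, `[a,b)`, `[b,m)`), each containing vertices of at most
one member of `Cs`; in particular at most three members of `Cs` contain a vertex of `P`. -/
theorem path_splits_into_three_segments
    {W : Type*} (G : SimpleGraph W) (k : ℕ) (hk : 2 ≤ k)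
    (Cs : Set (Set W))
    (hfar : ∀ C ∈ Cs, ∀ C' ∈ Cs, C ≠ C' →
      ∀ u ∈ C, ∀ v ∈ C', ∀ p : G.Walk u v, 2 * k - 1 ≤ p.length)
    (m : ℕ) (hm : m ≤ ⌈(14 * (k : ℚ)) / 3⌉₊ - 1) (f : ℕ → W)
    (hinj : ∀ s t : ℕ, s < t → t < m → f s ≠ f t)
    (hadj : ∀ t : ℕ, t + 1 < m → G.Adj (f t) (f (t + 1))) :
    (∃ a b : ℕ, a ≤ b ∧ b ≤ m ∧
        segmentTouchesAtMostOne Cs f 0 a ∧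
        segmentTouchesAtMostOne Cs f a b ∧
        segmentTouchesAtMostOne Cs f b m) ∧
    (¬ ∃ C₁ ∈ Cs, ∃ C₂ ∈ Cs, ∃ C₃ ∈ Cs, ∃ C₄ ∈ Cs,
        C₁ ≠ C₂ ∧ C₁ ≠ C₃ ∧ C₁ ≠ C₄ ∧ C₂ ≠ C₃ ∧ C₂ ≠ C₄ ∧ C₃ ≠ C₄ ∧
        (∃ t < m, f t ∈ C₁) ∧ (∃ t < m, f t ∈ C₂) ∧
        (∃ t < m, f t ∈ C₃) ∧ (∃ t < m, f t ∈ C₄)) := by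
  classical
  -- walks along the path
  have hwalk : ∀ t s : ℕ, s ≤ t → t < m →
      ∃ p : G.Walk (f s) (f t), p.length = t - s := by
    intro t
    induction t with
    | zero =>
      intro s hs _
      have h0 : s = 0 := Nat.le_zero.mp hs
      subst h0
      exact ⟨SimpleGraph.Walk.nil, rfl⟩
    | succ n ih =>
      intro s hs hm'
      rcases Nat.lt_or_ge s (n + 1) with h | h
      · obtain ⟨p, hp⟩ := ih s (by omega) (by omega)
        refine ⟨p.concat (hadj n hm'), ?_⟩
        rw [SimpleGraph.Walk.length_concat, hp]; omega
      · have h0 : s = n + 1 := by omega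
        subst h0
        exact ⟨SimpleGraph.Walk.nil, by simp⟩
  -- distance lower bound along the path
  have hfar' : ∀ C ∈ Cs, ∀ C' ∈ Cs, C ≠ C' →
      ∀ s t : ℕ, s ≤ t → t < m → f s ∈ C → f t ∈ C' → 2 * k - 1 ≤ t - s := by
    intro C hC C' hC' hne s t hst htm hsC htC
    obtain ⟨p, hp⟩ := hwalk t s hst htm
    have := hfar C hC C' hC' hne _ hsC _ htC p
    omega
  -- numeric bound
  have hm6 : m ≤ 6 * k - 3 := by
    have hceil : ⌈(14 * (k : ℚ)) / 3⌉₊ ≤ 6 * k - 2 := by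
      rw [Nat.ceil_le]
      have h2 : (2 : ℕ) ≤ 6 * k := by omega
      have hkq : (2 : ℚ) ≤ (k : ℚ) := by exact_mod_cast hk
      rw [div_le_iff₀ (by norm_num : (0:ℚ) < 3)]
      push_cast [h2]
      linarith
    omega
  -- first cut point
  obtain ⟨a, haM, hano, haspec⟩ :
      ∃ a, a ≤ m ∧ (∀ t < a, ¬ badAt Cs f m 0 t) ∧ (a < m → badAt Cs f m 0 a) := by
    by_cases h : ∃ t, badAt Cs f m 0 t
    · exact ⟨Nat.find h, (Nat.find_spec h).1.le, fun t ht => Nat.find_min h ht,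
        fun _ => Nat.find_spec h⟩
    · exact ⟨m, le_rfl, fun t _ hq => h ⟨t, hq⟩, fun h' => absurd h' (lt_irrefl m)⟩
  -- second cut point
  obtain ⟨b, haB, hbM, hbno, hbspec⟩ :
      ∃ b, a ≤ b ∧ b ≤ m ∧ (∀ t < b, ¬ badAt Cs f m a t) ∧ (b < m → badAt Cs f m a b) := by
    by_cases h : ∃ t, badAt Cs f m a t
    · obtain ⟨-, s, C, C', hs1, hs2, -⟩ := Nat.find_spec h
      exact ⟨Nat.find h, by omega, (Nat.find_spec h).1.le, fun t ht => Nat.find_min h ht,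
        fun _ => Nat.find_spec h⟩
    · exact ⟨m, haM, le_rfl, fun t _ hq => h ⟨t, hq⟩, fun h' => absurd h' (lt_irrefl m)⟩
  have seg1 : segmentTouchesAtMostOne Cs f 0 a := by
    intro C hC C' hC' h1 h2
    obtain ⟨t1, -, ht1a, ht1C⟩ := h1
    obtain ⟨t2, -, ht2a, ht2C⟩ := h2
    by_contra hne
    have ht1m : t1 < m := lt_of_lt_of_le ht1a haM
    have ht2m : t2 < m := lt_of_lt_of_le ht2a haM
    rcases lt_trichotomy t1 t2 with h | h | h
    · exact hano t2 ht2a ⟨ht2m, t1, C, C', Nat.zero_le _, h, hC, hC', hne, ht1C, ht2C⟩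
    · subst h
      have := hfar' C hC C' hC' hne t1 t1 le_rfl ht1m ht1C ht2C
      omega
    · exact hano t1 ht1a ⟨ht1m, t2, C', C, Nat.zero_le _, h, hC', hC, (fun h => hne h.symm), ht2C, ht1C⟩
  have seg2 : segmentTouchesAtMostOne Cs f a b := by
    intro C hC C' hC' h1 h2
    obtain ⟨t1, ht1a, ht1b, ht1C⟩ := h1
    obtain ⟨t2, ht2a, ht2b, ht2C⟩ := h2
    by_contra hne
    have ht1m : t1 < m := lt_of_lt_of_le ht1b hbM
    have ht2m : t2 < m := lt_of_lt_of_le ht2b hbM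
    rcases lt_trichotomy t1 t2 with h | h | h
    · exact hbno t2 ht2b ⟨ht2m, t1, C, C', ht1a, h, hC, hC', hne, ht1C, ht2C⟩
    · subst h
      have := hfar' C hC C' hC' hne t1 t1 le_rfl ht1m ht1C ht2C
      omega
    · exact hbno t1 ht1b ⟨ht1m, t2, C', C, ht2a, h, hC', hC, (fun h => hne h.symm), ht2C, ht1C⟩
  have seg3 : segmentTouchesAtMostOne Cs f b m := by
    have key : ∀ C ∈ Cs, ∀ C' ∈ Cs, C ≠ C' →
        ∀ s t : ℕ, b ≤ s → s < t → t < m → f s ∈ C → f t ∈ C' → False := by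
      intro C hC C' hC' hne s t hbs hst htm hsC htC
      have hd3 : 2 * k - 1 ≤ t - s := hfar' C hC C' hC' hne s t hst.le htm hsC htC
      have hbm : b < m := by omega
      obtain ⟨-, s1, C1, C2, ha1, hs1b, hC1, hC2, hne12, hm1, hm2⟩ := hbspec hbm
      have hd2 : 2 * k - 1 ≤ b - s1 :=
        hfar' C1 hC1 C2 hC2 hne12 s1 b hs1b.le hbm hm1 hm2
      have ham : a < m := by omega
      obtain ⟨-, s0, D1, D2, -, hs0a, hD1, hD2, hneD, hn1, hn2⟩ := haspec ham
      have hd1 : 2 * k - 1 ≤ a - s0 :=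
        hfar' D1 hD1 D2 hD2 hneD s0 a hs0a.le ham hn1 hn2
      omega
    intro C hC C' hC' h1 h2
    obtain ⟨t1, ht1b, ht1m, ht1C⟩ := h1
    obtain ⟨t2, ht2b, ht2m, ht2C⟩ := h2
    by_contra hne
    rcases lt_trichotomy t1 t2 with h | h | h
    · exact key C hC C' hC' hne t1 t2 ht1b h ht2m ht1C ht2C
    · subst h
      have := hfar' C hC C' hC' hne t1 t1 le_rfl ht1m ht1C ht2C
      omega
    · exact key C' hC' C hC (fun h => hne h.symm) t2 t1 ht2b h ht1m ht2C ht1C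
  refine ⟨⟨a, b, haB, hbM, seg1, seg2, seg3⟩, ?_⟩
  rintro ⟨C1, h1, C2, h2, C3, h3, C4, h4, h12, h13, h14, h23, h24, h34,
    ⟨t1, ht1, m1⟩, ⟨t2, ht2, m2⟩, ⟨t3, ht3, m3⟩, ⟨t4, ht4, m4⟩⟩
  have key : ∀ s t : ℕ, s < m → t < m →
      (if s < a then (0:ℕ) else if s < b then 1 else 2) =
      (if t < a then (0:ℕ) else if t < b then 1 else 2) →
      ∀ C ∈ Cs, ∀ C' ∈ Cs, f s ∈ C → f t ∈ C' → C = C' := by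
    intro s t hsm htm hidx C hC C' hC' hsC htC
    split_ifs at hidx
    all_goals first
      | omega
      | exact seg1 C hC C' hC' ⟨s, Nat.zero_le _, by omega, hsC⟩ ⟨t, Nat.zero_le _, by omega, htC⟩
      | exact seg2 C hC C' hC' ⟨s, by omega, by omega, hsC⟩ ⟨t, by omega, by omega, htC⟩
      | exact seg3 C hC C' hC' ⟨s, by omega, hsm, hsC⟩ ⟨t, by omega, htm, htC⟩
  obtain ⟨n1, hn1, hn1le⟩ : ∃ n, (if t1 < a then (0:ℕ) else if t1 < b then 1 else 2) = n ∧ n ≤ 2 :=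
    ⟨_, rfl, by split_ifs <;> omega⟩
  obtain ⟨n2, hn2, hn2le⟩ : ∃ n, (if t2 < a then (0:ℕ) else if t2 < b then 1 else 2) = n ∧ n ≤ 2 :=
    ⟨_, rfl, by split_ifs <;> omega⟩
  obtain ⟨n3, hn3, hn3le⟩ : ∃ n, (if t3 < a then (0:ℕ) else if t3 < b then 1 else 2) = n ∧ n ≤ 2 :=
    ⟨_, rfl, by split_ifs <;> omega⟩
  obtain ⟨n4, hn4, hn4le⟩ : ∃ n, (if t4 < a then (0:ℕ) else if t4 < b then 1 else 2) = n ∧ n ≤ 2 :=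
    ⟨_, rfl, by split_ifs <;> omega⟩
  have d12 : n1 ≠ n2 := fun h => h12 (key t1 t2 ht1 ht2 (by rw [hn1, hn2, h]) C1 h1 C2 h2 m1 m2)
  have d13 : n1 ≠ n3 := fun h => h13 (key t1 t3 ht1 ht3 (by rw [hn1, hn3, h]) C1 h1 C3 h3 m1 m3)
  have d14 : n1 ≠ n4 := fun h => h14 (key t1 t4 ht1 ht4 (by rw [hn1, hn4, h]) C1 h1 C4 h4 m1 m4)
  have d23 : n2 ≠ n3 := fun h => h23 (key t2 t3 ht2 ht3 (by rw [hn2, hn3, h]) C2 h2 C3 h3 m2 m3)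
  have d24 : n2 ≠ n4 := fun h => h24 (key t2 t4 ht2 ht4 (by rw [hn2, hn4, h]) C2 h2 C4 h4 m2 m4)
  have d34 : n3 ≠ n4 := fun h => h34 (key t3 t4 ht3 ht4 (by rw [hn3, hn4, h]) C3 h3 C4 h4 m3 m4)
  omega
end
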